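/- The SEI estimator is unbiased: for every finite rooted tree T with cost function c, every budget B ∈ ℕ, every positive importance function r on the nodes of T, and every hypernode v, the expected value of C_SEI(T_v) equals Cost(T_v)/|v|; equivalently, |v|·C_SEI(T_v) is an unbiased estimator of Cost(T_v). (Paper's Theorem 3.) -/
import Mathlib


open Finset

/-- A finite rooted tree on a finite node type `V`.  The root is its own parent,
every non-root node has a parent whose depth is one smaller, and the root is the
unique node of depth `0`. -/
structure FinRootedTree (V : Type) [Fintype V] [DecidableEq V] where
  root : V
  parent : V → V
  depth : V → ℕ
  depth_root : depth root = 0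
  parent_root : parent root = root
  depth_parent : ∀ v, v ≠ root → depth (parent v) + 1 = depth v
  eq_root_of_depth_zero : ∀ v, depth v = 0 → v = root

namespace FinRootedTree

variable {V : Type} [Fintype V] [DecidableEq V]

/-- The set of children of a node. -/
def children (T : FinRootedTree V) (x : V) : Finset V :=
  Finset.univ.filter fun w => w ≠ T.root ∧ T.parent w = x

/-- `S(v)`: the set of all children of nodes of a hypernode `v`. -/
def succs (T : FinRootedTree V) (v : Finset V) : Finset V :=
  v.biUnion T.children

/-- The set of nodes of the subtree rooted at `x` (the descendants of `x`,
including `x` itself). -/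
def desc (T : FinRootedTree V) (x : V) : Finset V :=
  Finset.univ.filter fun w =>
    x ∈ (Finset.range (T.depth w + 1)).image fun k => T.parent^[k] w

/-- `Cost(T_x)`: the total cost of the subtree rooted at `x`. -/
noncomputable def subtreeCost (T : FinRootedTree V) (c : V → ℝ) (x : V) : ℝ :=
  ∑ w ∈ T.desc x, c w

/-- `Cost(T_v)`: the total cost of the forest rooted at the hypernode `v`. -/
noncomputable def forestCost (T : FinRootedTree V) (c : V → ℝ) (v : Finset V) : ℝ :=
  ∑ x ∈ v, T.subtreeCost c x

/-- `H(v)`: the hyperchildren of `v` for budget `B`, i.e. the subsets of `S(v)`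
of size `min B |S(v)|`. -/
def hyper (T : FinRootedTree V) (B : ℕ) (v : Finset V) : Finset (Finset V) :=
  (T.succs v).powersetCard (min B (T.succs v).card)

/-- A hypernode: a nonempty set of distinct nodes, all at the same depth. -/
def IsHypernode (T : FinRootedTree V) (v : Finset V) : Prop :=
  v.Nonempty ∧ ∀ a ∈ v, ∀ b ∈ v, T.depth a = T.depth b

/-- Expectation functional of the SEI estimator `C_SEI(T_v)` (with importance
function `r`): `seiE T c B r fuel v g` is `E[g(C_SEI(T_v))]`, defined by the
recursion of Algorithm 2, where the hypernode `w` is drawn from `H(v)` with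
probability `r(w) / (r(S(v)) * C(|S(v)|-1, |w|-1))`, with enough fuel to reach
the leaves. -/
noncomputable def seiE (T : FinRootedTree V) (c : V → ℝ) (B : ℕ)
    (r : V → ℝ) : ℕ → Finset V → (ℝ → ℝ) → ℝ
  | 0, v, g => g ((∑ x ∈ v, c x) / (v.card : ℝ))
  | fuel + 1, v, g =>
      if T.succs v = ∅ then g ((∑ x ∈ v, c x) / (v.card : ℝ))
      else
        ∑ w ∈ T.hyper B v,
          ((∑ a ∈ w, r a) /
              ((∑ a ∈ T.succs v, r a) *
                ((((T.succs v).card - 1).choose (w.card - 1) : ℕ) : ℝ))) *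
            seiE T c B r fuel w fun y =>
              g ((∑ x ∈ v, c x) / (v.card : ℝ) +
                ((w.card : ℝ) / (v.card : ℝ)) *
                  ((∑ a ∈ T.succs v, r a) / (∑ a ∈ w, r a)) * y)

lemma depth_iterate (T : FinRootedTree V) :
    ∀ (k : ℕ) (w : V), k ≤ T.depth w → T.depth (T.parent^[k] w) + k = T.depth w := by
  intro k
  induction k with
  | zero => intro w _; simp
  | succ k ih =>
    intro w hk
    have hw : w ≠ T.root := by
      intro h; rw [h, T.depth_root] at hk; omega
    have hd := T.depth_parent w hw
    rw [Function.iterate_succ_apply]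
    have h1 : k ≤ T.depth (T.parent w) := by omega
    have h2 := ih (T.parent w) h1
    omega

lemma mem_desc {T : FinRootedTree V} {x w : V} :
    w ∈ T.desc x ↔ ∃ k, k ≤ T.depth w ∧ T.parent^[k] w = x := by
  simp [desc, Nat.lt_succ_iff]

lemma self_mem_desc (T : FinRootedTree V) (x : V) : x ∈ T.desc x :=
  mem_desc.2 ⟨0, by simp⟩

lemma depth_le_of_mem_desc {T : FinRootedTree V} {x w : V} (h : w ∈ T.desc x) :
    T.depth x ≤ T.depth w := by
  obtain ⟨k, hk, rfl⟩ := mem_desc.1 h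
  have := T.depth_iterate k w hk
  omega

lemma mem_children {T : FinRootedTree V} {x y : V} :
    y ∈ T.children x ↔ y ≠ T.root ∧ T.parent y = x := by
  simp [children]

lemma depth_of_mem_children {T : FinRootedTree V} {x y : V} (h : y ∈ T.children x) :
    T.depth y = T.depth x + 1 := by
  obtain ⟨h1, h2⟩ := mem_children.1 h
  have h3 := T.depth_parent y h1
  rw [h2] at h3
  omega

lemma desc_disjoint {T : FinRootedTree V} {y z : V} (hd : T.depth y = T.depth z)
    (hne : y ≠ z) : Disjoint (T.desc y) (T.desc z) := by
  rw [Finset.disjoint_left]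
  intro w hy hz
  obtain ⟨k, hk, hky⟩ := mem_desc.1 hy
  obtain ⟨j, hj, hjz⟩ := mem_desc.1 hz
  have h1 := T.depth_iterate k w hk
  have h2 := T.depth_iterate j w hj
  rw [hky] at h1; rw [hjz] at h2
  have : k = j := by omega
  exact hne (by rw [← hky, this, hjz])

lemma children_disjoint {T : FinRootedTree V} {x x' : V} (hne : x ≠ x') :
    Disjoint (T.children x) (T.children x') := by
  rw [Finset.disjoint_left]
  intro y hy hy'
  exact hne ((mem_children.1 hy).2 ▸ (mem_children.1 hy').2 ▸ rfl)

lemma desc_decomp (T : FinRootedTree V) (x : V) :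
    T.desc x = insert x ((T.children x).biUnion T.desc) := by
  ext w
  simp only [Finset.mem_insert, Finset.mem_biUnion]
  constructor
  · intro h
    obtain ⟨k, hk, hkx⟩ := mem_desc.1 h
    cases k with
    | zero => left; exact hkx
    | succ j =>
      right
      refine ⟨T.parent^[j] w, ?_, mem_desc.2 ⟨j, by omega, rfl⟩⟩
      have hdj := T.depth_iterate j w (by omega)
      have hne : T.parent^[j] w ≠ T.root := by
        intro h'
        rw [h', T.depth_root] at hdj
        omega
      rw [mem_children]
      exact ⟨hne, by rw [← Function.iterate_succ_apply' T.parent j w]; exact hkx⟩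
  · rintro (rfl | ⟨y, hy, hw⟩)
    · exact T.self_mem_desc w
    · obtain ⟨k, hk, hky⟩ := mem_desc.1 hw
      obtain ⟨h1, h2⟩ := mem_children.1 hy
      have hdy : 1 ≤ T.depth y := by
        rcases Nat.eq_zero_or_pos (T.depth y) with h | h
        · exact absurd (T.eq_root_of_depth_zero y h) h1
        · omega
      have hdk := T.depth_iterate k w hk
      rw [hky] at hdk
      exact mem_desc.2 ⟨k + 1, by omega, by
        rw [Function.iterate_succ_apply', hky, h2]⟩

lemma depth_add_one_le_card (T : FinRootedTree V) (y : V) :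
    T.depth y + 1 ≤ Fintype.card V := by
  have := Finset.card_le_card_of_injOn (fun k => T.parent^[k] y)
    (fun k _ => Finset.mem_univ _) (s := Finset.range (T.depth y + 1)) ?_
  · simpa using this
  · intro k hk j hj hkj
    simp only [Finset.mem_coe, Finset.mem_range, Nat.lt_succ_iff] at hk hj
    have h1 := T.depth_iterate k y hk
    have h2 := T.depth_iterate j y hj
    have hkj' : T.parent^[k] y = T.parent^[j] y := hkj
    rw [hkj'] at h1
    omega

lemma subtreeCost_eq (T : FinRootedTree V) (c : V → ℝ) (x : V) :
    T.subtreeCost c x = c x + ∑ y ∈ T.children x, T.subtreeCost c y := by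
  have hnot : x ∉ (T.children x).biUnion T.desc := by
    simp only [Finset.mem_biUnion, not_exists]
    rintro y ⟨hy, hxy⟩
    have h1 := depth_le_of_mem_desc hxy
    have h2 := depth_of_mem_children hy
    omega
  rw [subtreeCost, desc_decomp, Finset.sum_insert hnot, Finset.sum_biUnion]
  · rfl
  · intro y hy z hz hne
    exact desc_disjoint (by rw [depth_of_mem_children hy, depth_of_mem_children hz]) hne

lemma forestCost_eq (T : FinRootedTree V) (c : V → ℝ) (v : Finset V) :
    T.forestCost c v = (∑ x ∈ v, c x) + T.forestCost c (T.succs v) := by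
  rw [forestCost, forestCost, succs, Finset.sum_biUnion
    (fun x _ y _ hxy => children_disjoint hxy)]
  rw [← Finset.sum_add_distrib]
  exact Finset.sum_congr rfl fun x _ => T.subtreeCost_eq c x

lemma card_powersetCard_filter_mem (s : Finset V) (a : V) (ha : a ∈ s) (m : ℕ) :
    ((s.powersetCard (m + 1)).filter (fun w => a ∈ w)).card = (s.card - 1).choose m := by
  rw [← Finset.card_erase_of_mem ha, ← Finset.card_powersetCard]
  refine Finset.card_bij' (fun w _ => w.erase a) (fun u _ => insert a u) ?_ ?_ ?_ ?_
  · intro w hw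
    simp only [Finset.mem_filter, Finset.mem_powersetCard] at hw
    obtain ⟨⟨hsub, hcard⟩, hmem⟩ := hw
    rw [Finset.mem_powersetCard]
    constructor
    · intro b hb
      rw [Finset.mem_erase] at hb ⊢
      exact ⟨hb.1, hsub hb.2⟩
    · rw [Finset.card_erase_of_mem hmem, hcard]
      omega
  · intro u hu
    rw [Finset.mem_powersetCard] at hu
    obtain ⟨hsub, hcard⟩ := hu
    have hanu : a ∉ u := fun h => (Finset.mem_erase.1 (hsub h)).1 rfl
    simp only [Finset.mem_filter, Finset.mem_powersetCard]
    refine ⟨⟨?_, ?_⟩, Finset.mem_insert_self a u⟩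
    · intro b hb
      rcases Finset.mem_insert.1 hb with rfl | hb
      · exact ha
      · exact (Finset.mem_erase.1 (hsub hb)).2
    · rw [Finset.card_insert_of_notMem hanu, hcard]
  · intro w hw
    simp only [Finset.mem_filter] at hw
    exact Finset.insert_erase hw.2
  · intro u hu
    rw [Finset.mem_powersetCard] at hu
    have hanu : a ∉ u := fun h => (Finset.mem_erase.1 (hu.1 h)).1 rfl
    exact Finset.erase_insert hanu

lemma sum_powersetCard_sum (s : Finset V) (m : ℕ) (f : V → ℝ) :
    ∑ w ∈ s.powersetCard (m + 1), ∑ a ∈ w, f a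
      = ((s.card - 1).choose m : ℝ) * ∑ a ∈ s, f a := by
  have h1 : ∀ w ∈ s.powersetCard (m + 1), ∑ a ∈ w, f a
      = ∑ a ∈ s, if a ∈ w then f a else 0 := by
    intro w hw
    rw [Finset.sum_ite_mem, Finset.inter_eq_right.2 (Finset.mem_powersetCard.1 hw).1]
  rw [Finset.sum_congr rfl h1, Finset.sum_comm, Finset.mul_sum]
  refine Finset.sum_congr rfl fun a ha => ?_
  rw [← Finset.sum_filter, Finset.sum_const, nsmul_eq_mul,
    card_powersetCard_filter_mem s a ha m]

lemma prob_sum (T : FinRootedTree V) (B : ℕ) (hB : 1 ≤ B) (r : V → ℝ)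
    (hr : ∀ x, 0 < r x) (v : Finset V) (hS : T.succs v ≠ ∅) :
    ∑ w ∈ T.hyper B v,
      (∑ a ∈ w, r a) /
        ((∑ a ∈ T.succs v, r a) *
          ((((T.succs v).card - 1).choose (w.card - 1) : ℕ) : ℝ)) = 1 := by
  have hsne : (T.succs v).Nonempty := Finset.nonempty_iff_ne_empty.2 hS
  have hn1 : 0 < (T.succs v).card := Finset.card_pos.2 hsne
  have hm1 : 1 ≤ min B (T.succs v).card := le_min hB hn1
  have hmn : min B (T.succs v).card ≤ (T.succs v).card := min_le_right _ _
  have hCpos : 0 < ((T.succs v).card - 1).choose (min B (T.succs v).card - 1) :=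
    Nat.choose_pos (by omega)
  have hC : ((((T.succs v).card - 1).choose (min B (T.succs v).card - 1) : ℕ) : ℝ) ≠ 0 := by
    exact_mod_cast hCpos.ne'
  have hrS : 0 < ∑ a ∈ T.succs v, r a := Finset.sum_pos (fun a _ => hr a) hsne
  have hm' : min B (T.succs v).card - 1 + 1 = min B (T.succs v).card := by omega
  have hsum := sum_powersetCard_sum (T.succs v) (min B (T.succs v).card - 1) r
  rw [hm'] at hsum
  calc ∑ w ∈ T.hyper B v,
      (∑ a ∈ w, r a) /
        ((∑ a ∈ T.succs v, r a) *
          ((((T.succs v).card - 1).choose (w.card - 1) : ℕ) : ℝ))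
      = (∑ w ∈ T.hyper B v, ∑ a ∈ w, r a) /
          ((∑ a ∈ T.succs v, r a) *
            ((((T.succs v).card - 1).choose (min B (T.succs v).card - 1) : ℕ) : ℝ)) := by
        rw [Finset.sum_div]
        refine Finset.sum_congr rfl fun w hw => ?_
        have hcard : w.card = min B (T.succs v).card :=
          (Finset.mem_powersetCard.1 hw).2
        rw [hcard]
    _ = 1 := by
        have : ∑ w ∈ T.hyper B v, ∑ a ∈ w, r a
            = ((((T.succs v).card - 1).choose (min B (T.succs v).card - 1) : ℕ) : ℝ) *
              ∑ a ∈ T.succs v, r a := hsum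
        rw [this, mul_comm]
        exact div_self (by positivity)

lemma seiE_affine (T : FinRootedTree V) (c : V → ℝ) (B : ℕ) (hB : 1 ≤ B)
    (r : V → ℝ) (hr : ∀ x, 0 < r x) :
    ∀ (fuel : ℕ) (v : Finset V) (a b : ℝ),
      seiE T c B r fuel v (fun y => a + b * y) = a + b * seiE T c B r fuel v id := by
  intro fuel
  induction fuel with
  | zero => intro v a b; simp [seiE]
  | succ fuel ih =>
    intro v a b
    by_cases hS : T.succs v = ∅
    · simp [seiE, hS]
    · simp only [seiE, if_neg hS, id_eq]
      have key : ∀ w ∈ T.hyper B v,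
          ((∑ a ∈ w, r a) /
            ((∑ a ∈ T.succs v, r a) *
              ((((T.succs v).card - 1).choose (w.card - 1) : ℕ) : ℝ))) *
            seiE T c B r fuel w (fun y =>
              a + b * ((∑ x ∈ v, c x) / (v.card : ℝ) +
                ((w.card : ℝ) / (v.card : ℝ)) *
                  ((∑ a ∈ T.succs v, r a) / (∑ a ∈ w, r a)) * y))
          = ((∑ a ∈ w, r a) /
              ((∑ a ∈ T.succs v, r a) *
                ((((T.succs v).card - 1).choose (w.card - 1) : ℕ) : ℝ))) * a
            + b * (((∑ a ∈ w, r a) /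
              ((∑ a ∈ T.succs v, r a) *
                ((((T.succs v).card - 1).choose (w.card - 1) : ℕ) : ℝ))) *
              seiE T c B r fuel w (fun y =>
                (∑ x ∈ v, c x) / (v.card : ℝ) +
                  ((w.card : ℝ) / (v.card : ℝ)) *
                    ((∑ a ∈ T.succs v, r a) / (∑ a ∈ w, r a)) * y)) := by
        intro w hw
        have h1 : (fun y => a + b * ((∑ x ∈ v, c x) / (v.card : ℝ) +
              ((w.card : ℝ) / (v.card : ℝ)) *
                ((∑ a ∈ T.succs v, r a) / (∑ a ∈ w, r a)) * y))
            = fun y => (a + b * ((∑ x ∈ v, c x) / (v.card : ℝ))) +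
                (b * (((w.card : ℝ) / (v.card : ℝ)) *
                  ((∑ a ∈ T.succs v, r a) / (∑ a ∈ w, r a)))) * y := by
          funext y; ring
        rw [h1, ih w _ _, ih w ((∑ x ∈ v, c x) / (v.card : ℝ))
          (((w.card : ℝ) / (v.card : ℝ)) *
            ((∑ a ∈ T.succs v, r a) / (∑ a ∈ w, r a)))]
        ring
      rw [Finset.sum_congr rfl key, Finset.sum_add_distrib, ← Finset.sum_mul,
        ← Finset.mul_sum, prob_sum T B hB r hr v hS, one_mul]

lemma forestCost_of_no_succs (T : FinRootedTree V) (c : V → ℝ) (v : Finset V)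
    (hS : T.succs v = ∅) : T.forestCost c v = ∑ x ∈ v, c x := by
  rw [forestCost_eq, hS]
  simp [forestCost]

lemma sei_main (T : FinRootedTree V) (c : V → ℝ) (B : ℕ) (hB : 1 ≤ B)
    (r : V → ℝ) (hr : ∀ x : V, 0 < r x) :
    ∀ (fuel : ℕ) (v : Finset V), T.IsHypernode v →
      (∀ x ∈ v, Fintype.card V ≤ T.depth x + 1 + fuel) →
      seiE T c B r fuel v id = T.forestCost c v / (v.card : ℝ) := by
  intro fuel
  induction fuel with
  | zero =>
    intro v hv hd
    have hS : T.succs v = ∅ := by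
      by_contra h
      obtain ⟨y, hy⟩ := Finset.nonempty_iff_ne_empty.2 h
      obtain ⟨x, hx, hyx⟩ := Finset.mem_biUnion.1 hy
      have h1 := depth_of_mem_children hyx
      have h2 := T.depth_add_one_le_card y
      have h3 := hd x hx
      omega
    rw [T.forestCost_of_no_succs c v hS]
    simp [seiE]
  | succ fuel ih =>
    intro v hv hd
    by_cases hS : T.succs v = ∅
    · rw [T.forestCost_of_no_succs c v hS]
      simp [seiE, hS]
    · have hsne : (T.succs v).Nonempty := Finset.nonempty_iff_ne_empty.2 hS
      have hn1 : 0 < (T.succs v).card := Finset.card_pos.2 hsne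
      have hm1 : 1 ≤ min B (T.succs v).card := le_min hB hn1
      have hmn : min B (T.succs v).card ≤ (T.succs v).card := min_le_right _ _
      have hCpos : 0 < ((T.succs v).card - 1).choose (min B (T.succs v).card - 1) :=
        Nat.choose_pos (by omega)
      have hC : ((((T.succs v).card - 1).choose (min B (T.succs v).card - 1) : ℕ) : ℝ) ≠ 0 := by
        exact_mod_cast hCpos.ne'
      have hrS : 0 < ∑ a ∈ T.succs v, r a := Finset.sum_pos (fun a _ => hr a) hsne
      have hv0 : (0 : ℝ) < (v.card : ℝ) := by
        exact_mod_cast Finset.card_pos.2 hv.1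
      -- depth facts
      have hdep : ∀ a ∈ T.succs v, ∃ x ∈ v, T.depth a = T.depth x + 1 := by
        intro a ha
        obtain ⟨x, hx, hax⟩ := Finset.mem_biUnion.1 ha
        exact ⟨x, hx, depth_of_mem_children hax⟩
      simp only [seiE, if_neg hS, id_eq]
      have key : ∀ w ∈ T.hyper B v,
          ((∑ a ∈ w, r a) /
            ((∑ a ∈ T.succs v, r a) *
              ((((T.succs v).card - 1).choose (w.card - 1) : ℕ) : ℝ))) *
            seiE T c B r fuel w (fun y =>
              (∑ x ∈ v, c x) / (v.card : ℝ) +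
                ((w.card : ℝ) / (v.card : ℝ)) *
                  ((∑ a ∈ T.succs v, r a) / (∑ a ∈ w, r a)) * y)
          = ((∑ a ∈ w, r a) /
              ((∑ a ∈ T.succs v, r a) *
                ((((T.succs v).card - 1).choose (w.card - 1) : ℕ) : ℝ))) *
              ((∑ x ∈ v, c x) / (v.card : ℝ))
            + T.forestCost c w *
              (1 / (((((T.succs v).card - 1).choose (min B (T.succs v).card - 1) : ℕ) : ℝ) *
                (v.card : ℝ))) := by
        intro w hw
        obtain ⟨hsub, hcard⟩ := Finset.mem_powersetCard.1 hw
        have hwne : w.Nonempty := Finset.card_pos.1 (by omega)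
        have hwhyp : T.IsHypernode w := by
          refine ⟨hwne, fun a ha b hb => ?_⟩
          obtain ⟨xa, hxa, hda⟩ := hdep a (hsub ha)
          obtain ⟨xb, hxb, hdb⟩ := hdep b (hsub hb)
          rw [hda, hdb, hv.2 xa hxa xb hxb]
        have hwd : ∀ a ∈ w, Fintype.card V ≤ T.depth a + 1 + fuel := by
          intro a ha
          obtain ⟨x, hx, hda⟩ := hdep a (hsub ha)
          have := hd x hx
          omega
        have ihw := ih w hwhyp hwd
        rw [seiE_affine T c B hB r hr fuel w ((∑ x ∈ v, c x) / (v.card : ℝ))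
          (((w.card : ℝ) / (v.card : ℝ)) * ((∑ a ∈ T.succs v, r a) / (∑ a ∈ w, r a))),
          ihw]
        have hrw : 0 < ∑ a ∈ w, r a := Finset.sum_pos (fun a _ => hr a) hwne
        rw [hcard]
        have hw0 : (0 : ℝ) < ((min B (T.succs v).card : ℕ) : ℝ) := by
          exact_mod_cast hm1
        field_simp
      rw [Finset.sum_congr rfl key, Finset.sum_add_distrib, ← Finset.sum_mul,
        ← Finset.sum_mul, prob_sum T B hB r hr v hS, one_mul]
      have hm' : min B (T.succs v).card - 1 + 1 = min B (T.succs v).card := by omega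
      have hsum2 : ∑ w ∈ T.hyper B v, T.forestCost c w
          = ((((T.succs v).card - 1).choose (min B (T.succs v).card - 1) : ℕ) : ℝ) *
            T.forestCost c (T.succs v) := by
        have := sum_powersetCard_sum (T.succs v) (min B (T.succs v).card - 1)
          (T.subtreeCost c)
        rw [hm'] at this
        simpa [hyper, forestCost] using this
      rw [hsum2, T.forestCost_eq c v]
      field_simp

/-- Paper's Theorem 3: the SEI estimator is unbiased, i.e.
`E[C_SEI(T_v)] = Cost(T_v)/|v|`; equivalently `|v| * C_SEI(T_v)` is an unbiased
estimator of `Cost(T_v)`. -/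
theorem sei_unbiased (T : FinRootedTree V) (c : V → ℝ) (hc : ∀ x, 0 ≤ c x)
    (B : ℕ) (hB : 1 ≤ B) (r : V → ℝ) (hr : ∀ x : V, 0 < r x)
    (v : Finset V) (hv : T.IsHypernode v) :
    seiE T c B r (Fintype.card V) v id = T.forestCost c v / (v.card : ℝ) ∧
    (v.card : ℝ) * seiE T c B r (Fintype.card V) v id = T.forestCost c v := by
  have h := sei_main T c B hB r hr (Fintype.card V) v hv (fun x hx => by omega)
  refine ⟨h, ?_⟩
  rw [h, mul_comm, div_mul_cancel₀]
  exact_mod_cast (Finset.card_pos.2 hv.1).ne'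

end FinRootedTree
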